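/- Every complete first-order theory T of an infinite Boolean algebra is k-independent for every k ≥ 1; the formula φ(x, y_0, …, y_{k-1}) := (y_0 ∩ y_1 ∩ ⋯ ∩ y_{k-1} ≤ x) witnesses this. In particular, for k = 2 and any n, if ⟨a_{i,j} : i,j < n⟩ are pairwise disjoint non-zero elements of a Boolean algebra, b_i := ⋃{a_{i,j} : j < n} and c_j := ⋃{a_{i,j} : i < n}, then the formulas ⟨φ(x, b_i, c_j) : i,j < n⟩ form an independent sequence: for each u ⊆ n × n the element a_u := ⋃{a_{i,j} : (i,j) ∈ u} realizes {φ(x,b_i,c_j)^{if((i,j)∈u)} : i,j < n}. -/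

import Mathlib

/-! In a saturated infinite Boolean algebra, transfinite recursion (each step realizing a type by
saturation) gives pairwise disjoint nonzero elements `e η` indexed by `η : Fin k → ι`. A further
use of saturation gives, for each `ℓ` and `α`, an element `A ℓ α` above every `e η` with
`η ℓ = α` and disjoint from all other `e η`. Then `e η ≤ D η := ⨅ ℓ, A ℓ (η ℓ)` while `e η` is
disjoint from every `D η'` with `η' ≠ η`, so a finite join of some of the `D η'` lies above `D η`
exactly when `D η` is one of the joinands; this realizes every pattern of the formula
`y₀ ⊓ ⋯ ⊓ y_{k-1} ≤ x`. For the `n × n` grid, `b_i ⊓ c_j = a_{i,j}` and the same argument applies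
with `D = e = a`. -/


open FirstOrder Cardinal Set

universe u

namespace Paper886

section Basic

variable (L : FirstOrder.Language.{u, u}) (M : Type u) [L.Structure M]

/-- A first-order formula in `n` object variables together with a finite tuple of
parameters from `M`. -/
structure ParamFormula (n : ℕ) : Type u where
  m : ℕ
  toFormula : L.Formula (Fin n ⊕ Fin m)
  params : Fin m → M

variable {L M}

/-- Realization of a parametrized formula at a tuple. -/
def ParamFormula.Realize {n : ℕ} (f : ParamFormula L M n) (v : Fin n → M) : Prop :=
  f.toFormula.Realize (Sum.elim v f.params)

/-- The parameters of `f` all lie in `B`. -/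
def ParamFormula.paramsIn {n : ℕ} (f : ParamFormula L M n) (B : Set M) : Prop :=
  ∀ i, f.params i ∈ B

/-- The set of realizations of a partial 1-type. -/
def realizeSet (p : Set (ParamFormula L M 1)) : Set M :=
  {a | ∀ f ∈ p, f.Realize fun _ => a}

/-- The partial type `p` is over the parameter set `B`. -/
def IsTypeOver (p : Set (ParamFormula L M 1)) (B : Set M) : Prop :=
  ∀ f ∈ p, f.paramsIn B

variable (L) in
/-- Two tuples realize the same type over a set `A` of parameters. -/
def SameType {α : Type u} (A : Set M) (a b : α → M) : Prop :=
  ∀ (n mp : ℕ) (φ : L.Formula (Fin n ⊕ Fin mp)) (vs : Fin n → α) (ps : Fin mp → M),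
    (∀ i, ps i ∈ A) →
      (φ.Realize (Sum.elim (fun i => a (vs i)) ps) ↔ φ.Realize (Sum.elim (fun i => b (vs i)) ps))

variable (L M)

/-- `M` is `κ`-saturated: every finitely satisfiable 1-type over fewer than `κ`
parameters is realized in `M`. -/
def Saturated (κ : Cardinal.{u}) : Prop :=
  ∀ B : Set M, #B < κ → ∀ p : Set (ParamFormula L M 1), IsTypeOver p B →
    (∀ s : Set (ParamFormula L M 1), s ⊆ p → s.Finite → ∃ a : M, ∀ f ∈ s, f.Realize fun _ => a) →
    ∃ a : M, a ∈ realizeSet p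

/-- `Th(M)` is dependent (NIP): no formula has the independence property, where consistency
of a pattern is rendered as finite satisfiability in the (saturated) monster. -/
def IsDependent : Prop :=
  ∀ (nx np : ℕ) (φ : L.Formula (Fin nx ⊕ Fin np)) (a : ℕ → Fin np → M),
    ¬ ∀ (u : Set ℕ) (s : Finset ℕ), ∃ x : Fin nx → M,
        ∀ i ∈ s, (φ.Realize (Sum.elim x (a i)) ↔ i ∈ u)

variable {L M}

/-- The cardinality `|T|` of the (complete) theory of `M`. -/
noncomputable def theoryCard (L : FirstOrder.Language.{u, u}) : Cardinal.{u} :=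
  ℵ₀ ⊔ L.card

variable (L M)

/-- A type-definable group: a partial type `p*` over `A*` together with definitions
(over `A*`) of the group operations making `p*(𝔠)` a group. -/
structure DefGroup : Type u where
  AStar : Set M
  pStar : Set (ParamFormula L M 1)
  pStar_over : IsTypeOver pStar AStar
  mul : M → M → M
  inv : M → M
  one : M
  mul_definable : ∃ φ : ParamFormula L M 3, φ.paramsIn AStar ∧
    ∀ x y z : M, (φ.Realize ![x, y, z] ↔ mul x y = z)
  inv_definable : ∃ φ : ParamFormula L M 2, φ.paramsIn AStar ∧
    ∀ x y : M, (φ.Realize ![x, y] ↔ inv x = y)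
  one_definable : ∃ φ : ParamFormula L M 1, φ.paramsIn AStar ∧
    ∀ x : M, (φ.Realize ![x] ↔ x = one)
  one_mem' : one ∈ realizeSet pStar
  mul_mem' : ∀ x ∈ realizeSet pStar, ∀ y ∈ realizeSet pStar, mul x y ∈ realizeSet pStar
  inv_mem' : ∀ x ∈ realizeSet pStar, inv x ∈ realizeSet pStar
  mul_assoc' : ∀ x ∈ realizeSet pStar, ∀ y ∈ realizeSet pStar, ∀ z ∈ realizeSet pStar,
    mul (mul x y) z = mul x (mul y z)
  one_mul' : ∀ x ∈ realizeSet pStar, mul one x = x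
  mul_one' : ∀ x ∈ realizeSet pStar, mul x one = x
  inv_mul' : ∀ x ∈ realizeSet pStar, mul (inv x) x = one
  mul_inv' : ∀ x ∈ realizeSet pStar, mul x (inv x) = one

variable {L M}

namespace DefGroup

variable (D : DefGroup L M)

/-- The underlying set of the group `G = p*(𝔠)`. -/
def carrier : Set M := realizeSet D.pStar

/-- `G` is abelian. -/
def IsAbelian : Prop := ∀ x ∈ D.carrier, ∀ y ∈ D.carrier, D.mul x y = D.mul y x

/-- `H` is a subgroup of `G`. -/
def IsSubgroup (H : Set M) : Prop :=
  H ⊆ D.carrier ∧ D.one ∈ H ∧ (∀ x ∈ H, ∀ y ∈ H, D.mul x y ∈ H) ∧ ∀ x ∈ H, D.inv x ∈ H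

/-- `(G : H) ≤ c`: at most `c` left cosets of `H` cover `G`. -/
def indexLE (H : Set M) (c : Cardinal.{u}) : Prop :=
  ∃ S : Set M, S ⊆ D.carrier ∧ #S ≤ c ∧ ∀ g ∈ D.carrier, ∃ s ∈ S, D.mul (D.inv s) g ∈ H

/-- `(G : H) < c`: fewer than `c` left cosets of `H` cover `G`. -/
def indexLT (H : Set M) (c : Cardinal.{u}) : Prop :=
  ∃ S : Set M, S ⊆ D.carrier ∧ #S < c ∧ ∀ g ∈ D.carrier, ∃ s ∈ S, D.mul (D.inv s) g ∈ H

/-- The realization set of the partial type `q^n_Γ`. -/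
def qSet (Γ : Set (ParamFormula L M 1)) (n : ℕ) : Set M :=
  {c | ∃ d : Fin n → M × M,
    (∀ ℓ, (d ℓ).1 ∈ D.carrier ∧ (d ℓ).2 ∈ D.carrier) ∧
    (∀ ℓ, ∀ f ∈ Γ, (f.Realize fun _ => (d ℓ).1) ↔ (f.Realize fun _ => (d ℓ).2)) ∧
    c = (List.ofFn fun ℓ => D.mul (D.inv (d ℓ).1) (d ℓ).2).foldr D.mul D.one}

/-- The realization set of `q^n_{ā}`, i.e. `q^n_{Γ_ā}` where `Γ_ā` consists of all
formulas with parameters in the range of `ā`. -/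
def qTupleSet {α : Type u} (a : α → M) (n : ℕ) : Set M :=
  D.qSet {f : ParamFormula L M 1 | f.paramsIn (Set.range a)} n

end DefGroup

end Basic

variable {L : FirstOrder.Language.{u, u}} {M : Type u} [L.Structure M]

variable (L) in
/-- `X` is the union of fewer than `κ` realization sets of types over `B`. -/
def UnionTypeDefOver (X B : Set M) (κ : Cardinal.{u}) : Prop :=
  ∃ ι : Type u, #ι < κ ∧ ∃ P : ι → Set (ParamFormula L M 1),
    (∀ i, IsTypeOver (P i) B) ∧ X = ⋃ i, realizeSet (P i)

variable (L) in
/-- `X` is union-type-definable (with fewer than `κ` parameters altogether). -/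
def UnionTypeDefinable (X : Set M) (κ : Cardinal.{u}) : Prop :=
  ∃ B : Set M, #B < κ ∧ UnionTypeDefOver L X B κ

/-- `G_q = (p* ∪ q)(𝔠)`. -/
def Gq (D : DefGroup L M) (q : Set (ParamFormula L M 1)) : Set M :=
  realizeSet (D.pStar ∪ q)

/-- `R_B`: the family of 1-types `q` over `B` such that `G_q` is a subgroup of `G`
of index `< κ`. -/
def RB (D : DefGroup L M) (κ : Cardinal.{u}) (B : Set M) : Set (Set (ParamFormula L M 1)) :=
  {q | IsTypeOver q B ∧ D.IsSubgroup (Gq D q) ∧ D.indexLT (Gq D q) κ}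

/-- `q_B`, the union of all members of `R_B`. -/
def qB (D : DefGroup L M) (κ : Cardinal.{u}) (B : Set M) : Set (ParamFormula L M 1) :=
  ⋃₀ RB D κ B

/-- `G_B = q_B(𝔠) ∩ G`. -/
def GB (D : DefGroup L M) (κ : Cardinal.{u}) (B : Set M) : Set M :=
  realizeSet (qB D κ B) ∩ D.carrier

/-- The complete type of `a` over `A` (as the set of all param-formulas over `A`
satisfied by `a`). -/
def typeOf (A : Set M) (a : M) : Set (ParamFormula L M 1) :=
  {f | f.paramsIn A ∧ f.Realize fun _ => a}

/-- `φ(x̄, ȳ₀, …, ȳ_{k-1})` is `k`-independent: for every index set of size `< κ` there is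
an array of parameter tuples such that every pattern on `^k ι` is (finitely) satisfiable. -/
def FormulaKIndep (M : Type u) [L.Structure M] (κ : Cardinal.{u}) (k nx : ℕ) (ny : Fin k → ℕ)
    (φ : L.Formula (Fin nx ⊕ ((ℓ : Fin k) × Fin (ny ℓ)))) : Prop :=
  ∀ ι : Type u, #ι < κ →
    ∃ a : (ℓ : Fin k) → ι → Fin (ny ℓ) → M,
      ∀ (u : Set (Fin k → ι)) (s : Finset (Fin k → ι)),
        ∃ x : Fin nx → M,
          ∀ η ∈ s, ((φ.Realize (Sum.elim x fun p => a p.1 (η p.1) p.2)) ↔ η ∈ u)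

/-- `Th(M)` is `k`-independent. -/
def KIndependent (L : FirstOrder.Language.{u, u}) (M : Type u) [L.Structure M] (κ : Cardinal.{u})
    (k : ℕ) : Prop :=
  ∃ (nx : ℕ) (ny : Fin k → ℕ) (φ : L.Formula (Fin nx ⊕ ((ℓ : Fin k) × Fin (ny ℓ)))),
    FormulaKIndep M κ k nx ny φ

/-- `Th(M)` is `k`-dependent. -/
def KDependent (L : FirstOrder.Language.{u, u}) (M : Type u) [L.Structure M] (κ : Cardinal.{u})
    (k : ℕ) : Prop :=
  ¬ KIndependent L M κ k

/-- The language of Boolean algebras: constants `⊥, ⊤`, a unary function (complement) and two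
binary functions (meet, join). -/
def baLang : FirstOrder.Language.{u, u} where
  Functions := fun n =>
    ULift.{u} ((PLift (n = 0) × Fin 2) ⊕ (PLift (n = 1) ⊕ (PLift (n = 2) × Fin 2)))
  Relations := fun _ => ULift.{u} Empty

def baBot : baLang.{u}.Functions 0 := ULift.up (Sum.inl (PLift.up rfl, 0))
def baTop : baLang.{u}.Functions 0 := ULift.up (Sum.inl (PLift.up rfl, 1))
def baCompl : baLang.{u}.Functions 1 := ULift.up (Sum.inr (Sum.inl (PLift.up rfl)))
def baMeet : baLang.{u}.Functions 2 := ULift.up (Sum.inr (Sum.inr (PLift.up rfl, 0)))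
def baJoin : baLang.{u}.Functions 2 := ULift.up (Sum.inr (Sum.inr (PLift.up rfl, 1)))

/-- The formula `φ(x, y_0, …, y_{k-1}) := (y_0 ∩ ⋯ ∩ y_{k-1} ≤ x)`, rendered as
`(y_0 ∩ ⋯ ∩ y_{k-1}) ∩ x = y_0 ∩ ⋯ ∩ y_{k-1}`. -/
def meetLeFormula (k : ℕ) : baLang.{u}.Formula (Fin 1 ⊕ ((ℓ : Fin k) × Fin 1)) :=
  let ymeet : baLang.{u}.Term (Fin 1 ⊕ ((ℓ : Fin k) × Fin 1)) :=
    (List.ofFn fun ℓ : Fin k => Language.Term.var (Sum.inr ⟨ℓ, (0 : Fin 1)⟩)).foldr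
      (fun t s => Language.Term.func baMeet ![t, s]) (Language.Term.func baTop ![])
  Language.Term.equal (Language.Term.func baMeet ![ymeet, Language.Term.var (Sum.inl 0)]) ymeet

theorem _root_.WellFounded.exists_fun_of_forall_exists {J X : Sort*} {r : J → J → Prop}
    (hr : WellFounded r) (Q : (j : J) → ({j' // r j' j} → X) → X → Prop)
    (h : ∀ j g, ∃ x, Q j g x) : ∃ F : J → X, ∀ j, Q j (fun j' => F j'.1) (F j) :=
  ⟨hr.fix fun j prev => (h j fun j' => prev j'.1 j'.2).choose,
    fun j => by rw [hr.fix_eq]; exact (h j _).choose_spec⟩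

theorem le_sup_iff_mem_of_disjoint {α β : Type*} [DistribLattice α] [OrderBot α]
    {e D : β → α} (he : ∀ b, e b ≠ ⊥) (heD : ∀ b, e b ≤ D b)
    (hdisj : ∀ b b', b ≠ b' → Disjoint (e b) (D b')) (s : Finset β) (b : β) :
    D b ≤ s.sup D ↔ b ∈ s := by
  refine ⟨fun hle => ?_, fun hb => Finset.le_sup hb⟩
  by_contra hb
  have : Disjoint (e b) (s.sup D) :=
    Finset.disjoint_sup_right.2 fun b' hb' => hdisj b b' (ne_of_mem_of_not_mem hb' hb).symm
  exact he b (this.eq_bot_of_le ((heD b).trans hle))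

theorem sup_inf_sup_eq_of_pairwise_disjoint {α ι κ : Type*} [DistribLattice α] [OrderBot α]
    [Fintype ι] [Fintype κ] {a : ι → κ → α}
    (ha : ∀ i j i' j', (i, j) ≠ (i', j') → Disjoint (a i j) (a i' j')) (i : ι) (j : κ) :
    (Finset.univ.sup fun j' => a i j') ⊓ (Finset.univ.sup fun i' => a i' j) = a i j := by
  refine le_antisymm ?_ (le_inf (Finset.le_sup (f := a i) (Finset.mem_univ j))
    (Finset.le_sup (f := (a · j)) (Finset.mem_univ i)))
  rw [Finset.sup_inf_sup]
  refine Finset.sup_le fun ⟨j', i'⟩ _ => ?_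
  by_cases h : (i, j') = (i', j)
  · obtain ⟨rfl, rfl⟩ := Prod.mk.inj h
    exact inf_le_left
  · exact (ha _ _ _ _ h).le_bot.trans bot_le

section BooleanAlgebra

open Function

variable {α : Type*} [BooleanAlgebra α]

theorem exists_ne_bot_le_infinite_Iic_sdiff {r : α} (hr : (Iic r).Infinite) :
    ∃ b, b ≠ ⊥ ∧ b ≤ r ∧ (Iic (r \ b)).Infinite := by
  obtain ⟨a, (har : a ≤ r), ha⟩ := (hr.sdiff (toFinite {⊥, r})).nonempty
  simp only [mem_insert_iff, mem_singleton_iff, not_or] at ha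
  have hsplit : Iic r ⊆ image2 (· ⊔ ·) (Iic a) (Iic (r \ a)) := fun x hx =>
    ⟨x ⊓ a, inf_le_right, x \ a, sdiff_le_sdiff_right hx, sup_inf_sdiff x a⟩
  by_cases hfin : (Iic a).Finite
  · refine ⟨a, ha.1, har, fun hfin' => hr ((hfin.image2 _ hfin').subset hsplit)⟩
  · refine ⟨r \ a, fun h => ha.2 (le_antisymm har (sdiff_eq_bot_iff.1 h)), sdiff_le, ?_⟩
    rwa [_root_.sdiff_sdiff_right_self, inf_eq_right.2 har]

theorem exists_pairwise_disjoint_nat [Infinite α] :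
    ∃ f : ℕ → α, (∀ n, f n ≠ ⊥) ∧ Pairwise (Disjoint on f) := by
  choose b hb using fun r : {r : α // (Iic r).Infinite} =>
    exists_ne_bot_le_infinite_Iic_sdiff r.2
  let next (r : {r : α // (Iic r).Infinite}) : {r : α // (Iic r).Infinite} :=
    ⟨r.1 \ b r, (hb r).2.2⟩
  let chain (n : ℕ) := next^[n] ⟨⊤, by simpa using infinite_univ⟩
  have chain_succ (n : ℕ) : chain (n + 1) = next (chain n) := iterate_succ_apply' ..
  have chain_anti : Antitone fun n => (chain n).1 :=
    antitone_nat_of_succ_le fun n => by rw [chain_succ]; exact sdiff_le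
  refine ⟨fun n => b (chain n), fun n => (hb _).1, (pairwise_disjoint_on _).2 fun m n hmn => ?_⟩
  have hn : b (chain n) ≤ (chain m).1 \ b (chain m) := by
    have : (chain (m + 1)).1 = (chain m).1 \ b (chain m) := by rw [chain_succ]
    exact this ▸ (hb _).2.1.trans (chain_anti hmn)
  exact (disjoint_sdiff_self_left.mono_left hn).symm

end BooleanAlgebra

theorem Saturated.exists_realize {L : FirstOrder.Language.{u, u}} {N : Type u} [L.Structure N]
    {κ : Cardinal.{u}} (hN : Saturated L N κ) {ι : Type u} (hι : #ι < κ)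
    (φ : ι → L.Formula (Fin 1 ⊕ Fin 1)) (c : ι → N)
    (hfin : ∀ s : Finset ι, ∃ x, ∀ i ∈ s, (φ i).Realize (Sum.elim (fun _ => x) fun _ => c i)) :
    ∃ x, ∀ i, (φ i).Realize (Sum.elim (fun _ => x) fun _ => c i) := by
  let P (i : ι) : ParamFormula L N 1 := ⟨1, φ i, fun _ => c i⟩
  obtain ⟨x, hx⟩ := hN (range c) (mk_range_le.trans_lt hι) (range P)
    (by rintro _ ⟨i, rfl⟩ _; exact mem_range_self i)
    (fun s hs hsfin => by
      obtain ⟨t, -, ht, rfl⟩ := hsfin.exists_subset_finite_image_eq (image_univ (f := P) ▸ hs)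
      obtain ⟨x, hx⟩ := hfin ht.toFinset
      exact ⟨x, by rintro _ ⟨i, hi, rfl⟩; exact hx i (ht.mem_toFinset.2 hi)⟩)
  exact ⟨x, fun i => hx _ (mem_range_self i)⟩

section BooleanAlgebraStructure

open Language Function

variable {N : Type u} [baLang.{u}.Structure N] [BooleanAlgebra N] {κ : Cardinal.{u}}

theorem realize_func_baMeet (hmeet : ∀ a b : N, Structure.funMap baMeet ![a, b] = a ⊓ b)
    {β : Type*} (v : β → N) (t s : baLang.{u}.Term β) :
    (Term.func baMeet ![t, s]).realize v = t.realize v ⊓ s.realize v := by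
  rw [Term.realize_func, ← hmeet]
  congr 1
  ext i
  fin_cases i <;> rfl

theorem realize_foldr_func_baMeet (htop : ∀ v : Fin 0 → N, Structure.funMap baTop v = ⊤)
    (hmeet : ∀ a b : N, Structure.funMap baMeet ![a, b] = a ⊓ b)
    {β : Type*} (v : β → N) (ts : List (baLang.{u}.Term β)) :
    (ts.foldr (fun t s => Term.func baMeet ![t, s]) (Term.func baTop ![])).realize v =
      (ts.map (Term.realize v)).foldr (· ⊓ ·) ⊤ := by
  induction ts with
  | nil => exact htop _
  | cons t ts ih => rw [List.foldr_cons, realize_func_baMeet hmeet, ih]; rfl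

theorem realize_meetLeFormula (htop : ∀ v : Fin 0 → N, Structure.funMap baTop v = ⊤)
    (hmeet : ∀ a b : N, Structure.funMap baMeet ![a, b] = a ⊓ b) (k : ℕ)
    (v : Fin 1 ⊕ ((_ : Fin k) × Fin 1) → N) :
    (meetLeFormula k).Realize v ↔
      Finset.univ.inf (fun ℓ => v (Sum.inr ⟨ℓ, 0⟩)) ≤ v (Sum.inl 0) := by
  rw [meetLeFormula, Formula.realize_equal, realize_func_baMeet hmeet,
    realize_foldr_func_baMeet htop hmeet, List.map_ofFn, inf_eq_left, Finset.inf_def,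
    Fin.univ_val_map, Multiset.inf_coe]
  rfl

def disjointFormula : baLang.{u}.Formula (Fin 1 ⊕ Fin 1) :=
  (Term.func baMeet ![Term.var (Sum.inl 0), Term.var (Sum.inr 0)]).equal (Term.func baBot ![])

def geFormula : baLang.{u}.Formula (Fin 1 ⊕ Fin 1) :=
  (Term.func baMeet ![Term.var (Sum.inr 0), Term.var (Sum.inl 0)]).equal (Term.var (Sum.inr 0))

theorem realize_disjointFormula (hbot : ∀ v : Fin 0 → N, Structure.funMap baBot v = ⊥)
    (hmeet : ∀ a b : N, Structure.funMap baMeet ![a, b] = a ⊓ b) (x y : N) :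
    disjointFormula.Realize (Sum.elim (fun _ => x) fun _ => y) ↔ Disjoint x y := by
  rw [disjointFormula, Formula.realize_equal, realize_func_baMeet hmeet, Term.realize_func, hbot,
    disjoint_iff]
  rfl

theorem realize_geFormula (hmeet : ∀ a b : N, Structure.funMap baMeet ![a, b] = a ⊓ b)
    (x y : N) : geFormula.Realize (Sum.elim (fun _ => x) fun _ => y) ↔ y ≤ x := by
  rw [geFormula, Formula.realize_equal, realize_func_baMeet hmeet, ← inf_eq_left]
  rfl

theorem exists_ne_bot_disjoint_of_saturated (hκ : ℵ₀ < κ) (hN : Saturated baLang.{u} N κ)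
    (hbot : ∀ v : Fin 0 → N, Structure.funMap baBot v = ⊥)
    (hmeet : ∀ a b : N, Structure.funMap baMeet ![a, b] = a ⊓ b)
    {f : ℕ → N} (hf0 : ∀ n, f n ≠ ⊥) (hf : Pairwise (Disjoint on f))
    {E : Set N} (hE : #E < κ) (hEf : ∀ c ∈ E, ∀ n, Disjoint c (f n)) :
    ∃ x, x ≠ ⊥ ∧ (∀ n, Disjoint x (f n)) ∧ ∀ c ∈ E, Disjoint x c := by
  classical
  have hf_inj : Injective f := fun m n h => by
    by_contra hmn
    have hdisj : Disjoint (f m) (f n) := hf hmn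
    exact hf0 n (disjoint_self.1 (h ▸ hdisj))
  set B := range f ∪ E
  have hB : #(Option B) < κ := by
    rw [mk_option]
    refine add_lt_of_lt hκ.le ((mk_union_le _ _).trans_lt (add_lt_of_lt hκ.le ?_ hE))
      (one_lt_aleph0.trans hκ)
    exact (mk_le_aleph0_iff.2 (countable_range f).to_subtype).trans_lt hκ
  -- `x ≠ ⊥` is expressed as `¬ Disjoint x ⊤`.
  obtain ⟨x, hx⟩ := hN.exists_realize hB
    (fun o => o.elim (∼disjointFormula) fun _ => disjointFormula)
    (fun o => o.elim ⊤ Subtype.val) fun s => by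
      obtain ⟨_, ⟨m, rfl⟩, hm⟩ :=
        (infinite_range_of_injective hf_inj).exists_notMem_finset (s.image (·.elim ⊤ Subtype.val))
      refine ⟨f m, ?_⟩
      rintro (_ | ⟨b, hb⟩) hi
      · simpa [realize_disjointFormula hbot hmeet] using hf0 m
      · rw [Option.elim_some, realize_disjointFormula hbot hmeet]
        rcases hb with ⟨n, rfl⟩ | hb
        · exact hf fun h => hm (h ▸ Finset.mem_image_of_mem _ hi)
        · exact (hEf b hb m).symm
  refine ⟨x, ?_, fun n => ?_, fun c hc => ?_⟩
  · simpa [realize_disjointFormula hbot hmeet] using hx none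
  · simpa [realize_disjointFormula hbot hmeet] using hx (some ⟨f n, .inl ⟨n, rfl⟩⟩)
  · simpa [realize_disjointFormula hbot hmeet] using hx (some ⟨c, .inr hc⟩)

theorem exists_le_disjoint_of_saturated (hκ : ℵ₀ < κ) (hN : Saturated baLang.{u} N κ)
    (hbot : ∀ v : Fin 0 → N, Structure.funMap baBot v = ⊥)
    (hmeet : ∀ a b : N, Structure.funMap baMeet ![a, b] = a ⊓ b)
    {S T : Set N} (hS : #S < κ) (hT : #T < κ) (hST : ∀ c ∈ S, ∀ d ∈ T, Disjoint c d) :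
    ∃ x, (∀ c ∈ S, c ≤ x) ∧ ∀ d ∈ T, Disjoint x d := by
  have hST_card : #(S ⊕ T) < κ := by
    simpa only [mk_sum, lift_id] using add_lt_of_lt hκ.le hS hT
  obtain ⟨x, hx⟩ := hN.exists_realize hST_card
    (Sum.elim (fun _ => geFormula) fun _ => disjointFormula) (Sum.elim Subtype.val Subtype.val)
    fun s => by
      let g : S ⊕ T → N := Sum.elim Subtype.val fun _ => ⊥
      refine ⟨s.sup g, ?_⟩
      rintro (⟨c, hc⟩ | ⟨d, hd⟩) hi
      · exact (realize_geFormula hmeet _ _).2 (Finset.le_sup (f := g) hi)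
      · refine (realize_disjointFormula hbot hmeet _ _).2 (Finset.disjoint_sup_left.2 ?_)
        rintro (⟨c, hc⟩ | _) -
        exacts [hST c hc d hd, disjoint_bot_left]
  exact ⟨x, fun c hc => (realize_geFormula hmeet _ _).1 (hx (.inl ⟨c, hc⟩)),
    fun d hd => (realize_disjointFormula hbot hmeet _ _).1 (hx (.inr ⟨d, hd⟩))⟩

theorem exists_pairwise_disjoint_of_saturated [Infinite N] (hκ : ℵ₀ < κ)
    (hN : Saturated baLang.{u} N κ) (hbot : ∀ v : Fin 0 → N, Structure.funMap baBot v = ⊥)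
    (hmeet : ∀ a b : N, Structure.funMap baMeet ![a, b] = a ⊓ b) {J : Type u} (hJ : #J < κ) :
    ∃ e : J → N, (∀ j, e j ≠ ⊥) ∧ Pairwise (Disjoint on e) := by
  obtain ⟨f, hf0, hf⟩ := exists_pairwise_disjoint_nat (α := N)
  let r : J → J → Prop := WellOrderingRel
  -- The elements are chosen disjoint from the fixed antichain `f`, which keeps a fresh `f m`
  -- available as a witness of finite satisfiability at every stage.
  obtain ⟨F, hF⟩ := (IsWellFounded.wf : WellFounded r).exists_fun_of_forall_exists
    (X := {x : N // ∀ n, Disjoint x (f n)}) (fun _ g x => x.1 ≠ ⊥ ∧ ∀ j', Disjoint x.1 (g j').1)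
    fun j g => by
      obtain ⟨x, hx0, hxf, hxg⟩ := exists_ne_bot_disjoint_of_saturated hκ hN hbot hmeet hf0 hf
        (E := range fun j' => (g j').1) (mk_range_le.trans_lt ((mk_subtype_le _).trans_lt hJ))
        (by rintro _ ⟨j', rfl⟩; exact (g j').2)
      exact ⟨⟨x, hxf⟩, hx0, fun j' => hxg _ ⟨j', rfl⟩⟩
  refine ⟨fun j => (F j).1, fun j => (hF j).1, fun j j' hne => ?_⟩
  rcases trichotomous_of r j j' with h | h | h
  · exact ((hF j').2 ⟨j, h⟩).symm
  · exact absurd h hne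
  · exact (hF j).2 ⟨j', h⟩

theorem exists_independent_grid_of_saturated [Infinite N] (hκ : ℵ₀ < κ)
    (hN : Saturated baLang.{u} N κ) (hbot : ∀ v : Fin 0 → N, Structure.funMap baBot v = ⊥)
    (hmeet : ∀ a b : N, Structure.funMap baMeet ![a, b] = a ⊓ b) (k : ℕ) {ι : Type u}
    (hι : #ι < κ) :
    ∃ (e : (Fin k → ι) → N) (A : Fin k → ι → N), (∀ η, e η ≠ ⊥) ∧
      (∀ η ℓ, e η ≤ A ℓ (η ℓ)) ∧ ∀ η ℓ α, η ℓ ≠ α → Disjoint (e η) (A ℓ α) := by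
  have hJ : #(Fin k → ι) < κ := by
    simpa using power_nat_le_max.trans_lt (max_lt hι hκ)
  obtain ⟨e, he0, he⟩ := exists_pairwise_disjoint_of_saturated hκ hN hbot hmeet hJ
  have hA (ℓ : Fin k) (α : ι) :=
    exists_le_disjoint_of_saturated hκ hN hbot hmeet (S := e '' {η | η ℓ = α})
      (T := e '' {η | η ℓ ≠ α}) (mk_image_le.trans_lt ((mk_subtype_le _).trans_lt hJ))
      (mk_image_le.trans_lt ((mk_subtype_le _).trans_lt hJ))
      (by rintro _ ⟨η, hη, rfl⟩ _ ⟨η', hη', rfl⟩; exact he fun h => hη' (h ▸ hη))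
  choose A hAle hAdisj using hA
  exact ⟨e, A, he0, fun η ℓ => hAle ℓ _ _ ⟨η, rfl, rfl⟩,
    fun η ℓ α h => (hAdisj ℓ α _ ⟨η, h, rfl⟩).symm⟩

theorem formulaKIndep_meetLeFormula_of_saturated [Infinite N] (hκ : ℵ₀ < κ)
    (hN : Saturated baLang.{u} N κ) (hbot : ∀ v : Fin 0 → N, Structure.funMap baBot v = ⊥)
    (htop : ∀ v : Fin 0 → N, Structure.funMap baTop v = ⊤)
    (hmeet : ∀ a b : N, Structure.funMap baMeet ![a, b] = a ⊓ b) (k : ℕ) :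
    FormulaKIndep N κ k 1 (fun _ => 1) (meetLeFormula k) := by
  classical
  intro ι hι
  obtain ⟨e, A, he0, heA, hdisj⟩ := exists_independent_grid_of_saturated hκ hN hbot hmeet k hι
  let D (η : Fin k → ι) : N := Finset.univ.inf fun ℓ => A ℓ (η ℓ)
  have hD (η : Fin k → ι) (t : Finset (Fin k → ι)) : D η ≤ t.sup D ↔ η ∈ t := by
    refine le_sup_iff_mem_of_disjoint he0 (fun ζ => Finset.le_inf fun ℓ _ => heA ζ ℓ)
      (fun ζ ζ' hne => ?_) t η
    obtain ⟨ℓ, hℓ⟩ := Function.ne_iff.1 hne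
    exact (hdisj ζ ℓ (ζ' ℓ) hℓ).mono_right (Finset.inf_le (Finset.mem_univ ℓ))
  refine ⟨fun ℓ α _ => A ℓ α, fun u s => ⟨fun _ => (s.filter (· ∈ u)).sup D, fun η hη => ?_⟩⟩
  rw [realize_meetLeFormula htop hmeet]
  exact (hD η _).trans (by simp [hη])

end BooleanAlgebraStructure

theorem example_dt25_general
    {M : Type u} [baLang.{u}.Structure M] [BooleanAlgebra M] [Infinite M]
    (κbar : Cardinal.{u}) (hκinacc : κbar.IsInaccessible)
    (hκsat : Saturated baLang.{u} M κbar)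
    (hbot : ∀ v : Fin 0 → M, Language.Structure.funMap baBot v = ⊥)
    (htop : ∀ v : Fin 0 → M, Language.Structure.funMap baTop v = ⊤)
    (hmeet : ∀ a b : M, Language.Structure.funMap baMeet ![a, b] = a ⊓ b) :
    (∀ k : ℕ, 1 ≤ k → FormulaKIndep M κbar k 1 (fun _ => 1) (meetLeFormula k)) ∧
    (∀ (n : ℕ) (a : Fin n → Fin n → M),
      (∀ i j, a i j ≠ ⊥) →
      (∀ i j i' j', (i, j) ≠ (i', j') → a i j ⊓ a i' j' = ⊥) →
      ∀ u : Finset (Fin n × Fin n), ∀ i j : Fin n,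
        ((Finset.univ.sup fun j' => a i j') ⊓ (Finset.univ.sup fun i' => a i' j) ≤
            u.sup (fun p => a p.1 p.2) ↔ (i, j) ∈ u)) := by
  refine ⟨fun k _ => formulaKIndep_meetLeFormula_of_saturated hκinacc.aleph0_lt hκsat hbot htop
    hmeet k, fun n a hne hdisj u i j => ?_⟩
  have hdisj' (i j i' j') (h : (i, j) ≠ (i', j')) : Disjoint (a i j) (a i' j') :=
    disjoint_iff.2 (hdisj i j i' j' h)
  rw [sup_inf_sup_eq_of_pairwise_disjoint hdisj']
  exact le_sup_iff_mem_of_disjoint (e := fun p => a p.1 p.2) (fun p => hne p.1 p.2)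
    (fun _ => le_rfl) (fun p q h => hdisj' _ _ _ _ h) u (i, j)

/-- Example 2.10 of [Sh:886]: the (complete) theory of any infinite Boolean algebra is
`k`-independent for every `k ≥ 1`, witnessed by the formula `y_0 ∩ ⋯ ∩ y_{k-1} ≤ x`;
moreover concretely: given pairwise disjoint nonzero `⟨a_{i,j} : i,j < n⟩`, setting
`b_i = ⋃_j a_{i,j}`, `c_j = ⋃_i a_{i,j}` and `a_u = ⋃_{(i,j)∈u} a_{i,j}`, the element `a_u`
realizes the pattern `⟨φ(x, b_i, c_j)^{if((i,j)∈u)} : i,j < n⟩`. -/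
theorem example_dt25
    {M : Type u} [baLang.{u}.Structure M] [BooleanAlgebra M] [Infinite M]
    (κbar : Cardinal.{u}) (hκinacc : κbar.IsInaccessible)
    (hκT : theoryCard baLang.{u} < κbar) (hκsat : Saturated baLang.{u} M κbar)
    (hbot : ∀ v : Fin 0 → M, Language.Structure.funMap baBot v = ⊥)
    (htop : ∀ v : Fin 0 → M, Language.Structure.funMap baTop v = ⊤)
    (hcompl : ∀ a : M, Language.Structure.funMap baCompl ![a] = aᶜ)
    (hmeet : ∀ a b : M, Language.Structure.funMap baMeet ![a, b] = a ⊓ b)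
    (hjoin : ∀ a b : M, Language.Structure.funMap baJoin ![a, b] = a ⊔ b) :
    (∀ k : ℕ, 1 ≤ k → FormulaKIndep M κbar k 1 (fun _ => 1) (meetLeFormula k)) ∧
    (∀ (n : ℕ) (a : Fin n → Fin n → M),
      (∀ i j, a i j ≠ ⊥) →
      (∀ i j i' j', (i, j) ≠ (i', j') → a i j ⊓ a i' j' = ⊥) →
      ∀ u : Finset (Fin n × Fin n), ∀ i j : Fin n,
        ((Finset.univ.sup fun j' => a i j') ⊓ (Finset.univ.sup fun i' => a i' j) ≤
            u.sup (fun p => a p.1 p.2) ↔ (i, j) ∈ u)) :=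
  example_dt25_general κbar hκinacc hκsat hbot htop hmeet

end Paper886
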